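/- arXiv:2002.01067 — 7 statements merged into one kernel-verified Lean document; each statement's English description precedes it below -/
import Mathlib

section
/- Every finitely presented module over a valuation ring has projective dimension at most 1. -/
/-!
A valuation ring is a local Bézout domain. Over a Bézout domain torsion-free modules are flat,
and finitely generated flat modules over a local ring are free. The kernel of a surjection
`Vⁿ → M` is torsion-free as a submodule of `Vⁿ`, and finitely generated because `M` is finitely
presented, hence free.
-/

open Module in
theorem ValuationRing.free_of_finite_of_isTorsionFree {V M : Type*} [CommRing V] [IsDomain V]
    [ValuationRing V] [AddCommGroup M] [Module V M] [Module.Finite V M] [IsTorsionFree V M] :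
    Free V M :=
  haveI : Flat V M := Flat.flat_iff_torsion_eq_bot_of_isBezout.mpr
    (Submodule.isTorsionFree_iff_torsion_eq_bot.mp ‹_›)
  free_of_flat_of_isLocalRing

/-- Every finitely presented module over a valuation ring has projective dimension
at most 1: it admits a projective resolution `0 → P₁ → P₀ → M → 0`, where we can take
`P₀` to be finite free and `P₁` the (projective) kernel of the augmentation. -/
theorem projDim_le_one_of_valuationRing
    (V : Type u) [CommRing V] [IsDomain V] [ValuationRing V]
    (M : Type u) [AddCommGroup M] [Module V M] [Module.FinitePresentation V M] :
    ∃ (n : ℕ) (f : (Fin n → V) →ₗ[V] M),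
      Function.Surjective f ∧ Module.Projective V (LinearMap.ker f) := by
  obtain ⟨n, f, hf⟩ := Module.Finite.exists_fin' V M
  have : Module.Finite V (LinearMap.ker f) := .of_fg (Module.FinitePresentation.fg_ker f hf)
  have : Module.Free V (LinearMap.ker f) := ValuationRing.free_of_finite_of_isTorsionFree
  exact ⟨n, f, hf, inferInstance⟩
end

section
/- Let V be a valuation ring and V → S a finite ring map inducing a surjection on prime spectra. Then V → S admits a V-linear left inverse; in particular, valuation rings are splinters. -/
/-!
Choose a prime `P` of `S` lying over `0`. Then `S ⧸ P` is a finite torsion-free module over the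
valuation ring `V`, hence flat (valuation rings are Bézout) and so free (`V` is local). By
Nakayama, `1 ∉ 𝔪 • (S ⧸ P)`, so some coordinate of `1` in a basis is a unit; rescaling that
coordinate functional and composing with `S → S ⧸ P` splits `V → S`.
-/

universe u

namespace IsLocalRing

variable {R : Type*} [CommRing R] [IsLocalRing R]

theorem exists_linearMap_apply_eq_one_of_notMem_maximalIdeal_smul_top
    {M : Type*} [AddCommGroup M] [Module R M] [Module.Free R M]
    {x : M} (hx : x ∉ maximalIdeal R • (⊤ : Submodule R M)) :
    ∃ f : M →ₗ[R] R, f x = 1 := by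
  let b := Module.Free.chooseBasis R M
  obtain ⟨i, hi⟩ : ∃ i, IsUnit (b.repr x i) := by
    by_contra! h
    refine hx ?_
    rw [← b.linearCombination_repr x, Finsupp.linearCombination_apply]
    exact Submodule.finsuppSum_mem _ _ _ _ fun i _ =>
      Submodule.smul_mem_smul ((mem_maximalIdeal _).mpr (h i)) trivial
  exact ⟨(hi.unit⁻¹ : Rˣ) • b.coord i, by simp [Units.smul_def]⟩

variable (R) in
theorem one_notMem_maximalIdeal_smul_top (A : Type*) [CommRing A] [Nontrivial A] [Algebra R A]
    [Module.Finite R A] : (1 : A) ∉ maximalIdeal R • (⊤ : Submodule R A) := by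
  have hne := Submodule.top_ne_ideal_smul_of_le_jacobson_annihilator (M := A)
    (maximalIdeal_le_jacobson (Module.annihilator R A))
  rw [Ideal.smul_top_eq_map] at hne ⊢
  intro h
  exact hne (by simp [Ideal.eq_top_of_isUnit_mem _ h isUnit_one])

variable (R) in
theorem exists_leftInverse_algebraLinearMap_of_free (A : Type*) [CommRing A] [Nontrivial A]
    [Algebra R A] [Module.Finite R A] [Module.Free R A] :
    ∃ g : A →ₗ[R] R, g ∘ₗ Algebra.linearMap R A = LinearMap.id := by
  obtain ⟨f, hf⟩ := exists_linearMap_apply_eq_one_of_notMem_maximalIdeal_smul_top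
    (one_notMem_maximalIdeal_smul_top R A)
  exact ⟨f, LinearMap.ext_ring (by simpa using hf)⟩

end IsLocalRing

theorem ValuationRing.free_of_isTorsionFree {V M : Type*} [CommRing V] [IsDomain V]
    [ValuationRing V] [AddCommGroup M] [Module V M] [Module.Finite V M]
    [Module.IsTorsionFree V M] : Module.Free V M :=
  have : Module.Flat V M := Module.Flat.flat_iff_torsion_eq_bot_of_isBezout.mpr
    (Submodule.isTorsionFree_iff_torsion_eq_bot.mp inferInstance)
  Module.free_of_flat_of_isLocalRing

theorem Ideal.faithfulSMul_quotient_of_comap_eq_bot {R A : Type*} [CommRing R] [CommRing A]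
    [Algebra R A] {P : Ideal A} (h : P.comap (algebraMap R A) = ⊥) : FaithfulSMul R (A ⧸ P) :=
  (faithfulSMul_iff_algebraMap_injective _ _).mpr <|
    (injective_iff_map_eq_zero _).mpr fun r hr => by
      have : r ∈ P.comap (algebraMap R A) := (Ideal.Quotient.eq_zero_iff_mem (I := P)).mp hr
      simpa [h] using this

/-- Any finite ring map from a valuation ring inducing a surjection on prime spectra
admits a `V`-linear left inverse; in particular, valuation rings are splinters. -/
theorem valuationRing_splinter
    (V S : Type u) [CommRing V] [IsDomain V] [ValuationRing V]
    [CommRing S] [Algebra V S] [Module.Finite V S]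
    (hsurj : Function.Surjective (PrimeSpectrum.comap (algebraMap V S))) :
    ∃ g : S →ₗ[V] V, g.comp (Algebra.linearMap V S) = LinearMap.id := by
  obtain ⟨P, hP⟩ := hsurj ⊥
  have : FaithfulSMul V (S ⧸ P.asIdeal) :=
    Ideal.faithfulSMul_quotient_of_comap_eq_bot (congrArg PrimeSpectrum.asIdeal hP)
  have : Module.IsTorsionFree V (S ⧸ P.asIdeal) := .trans_faithfulSMul V (S ⧸ P.asIdeal) _
  have : Module.Free V (S ⧸ P.asIdeal) := ValuationRing.free_of_isTorsionFree
  obtain ⟨g, hg⟩ := IsLocalRing.exists_leftInverse_algebraLinearMap_of_free V (S ⧸ P.asIdeal)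
  refine ⟨g ∘ₗ (Ideal.Quotient.mkₐ V P.asIdeal).toLinearMap, LinearMap.ext_ring ?_⟩
  simpa using LinearMap.congr_fun hg 1
end

section
/- Let V be a valuation ring and V → S an injective finite ring map with S an integral domain. Then S is a free V-module and the element 1 ∈ S is part of a V-basis of S; consequently V → S splits as a map of V-modules. -/
/-!
A torsion-free module over a valuation ring (a Bézout domain) is flat, and over a local ring
`(R, 𝔪, k)` any lift of a `k`-basis of `k ⊗ M` is an `R`-basis of a finite flat module `M`.
Since `S ≠ 0` is finite over `V`, Nakayama gives `k ⊗ S ≠ 0`, so `1 ⊗ 1` is a nonzero vector of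
`k ⊗ S`; extending it to a `k`-basis and lifting with `1` in its place gives a `V`-basis of `S`
containing `1`, whose coordinate function at `1` splits `V → S`.
-/

universe u v

open IsLocalRing TensorProduct

theorem Module.Flat.of_isTorsionFree_of_isBezout {R M : Type*} [CommRing R] [IsDomain R]
    [IsBezout R] [AddCommGroup M] [Module R M] [Module.IsTorsionFree R M] :
    Module.Flat R M := by
  rw [Module.Flat.flat_iff_torsion_eq_bot_of_isBezout,
    ← Submodule.isTorsionFree_iff_torsion_eq_bot]
  infer_instance

theorem IsLocalRing.one_tmul_one_ne_zero {R S : Type*} [CommRing R] [IsLocalRing R]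
    [CommRing S] [Algebra R S] [Module.Finite R S] [Nontrivial S] :
    (1 : ResidueField R) ⊗ₜ[R] (1 : S) ≠ 0 := by
  have : Nontrivial (ResidueField R ⊗[R] S) := by
    rw [← not_subsingleton_iff_nontrivial, IsLocalRing.subsingleton_tensorProduct]
    exact not_subsingleton S
  exact one_ne_zero

theorem IsLocalRing.exists_basis_of_one_tmul_ne_zero {R : Type*} {M : Type v} [CommRing R]
    [IsLocalRing R] [AddCommGroup M] [Module R M] [Module.Finite R M] [Module.Flat R M] {x : M}
    (hx : (1 : ResidueField R) ⊗ₜ[R] x ≠ 0) :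
    ∃ (ι : Type v) (b : Module.Basis ι R M) (i : ι), b i = x := by
  classical
  have hxk := LinearIndepOn.singleton (R := ResidueField R) (v := id) hx
  let w := Module.Basis.extend hxk
  obtain ⟨i₀, hi₀⟩ : ∃ i, w i = 1 ⊗ₜ x :=
    ⟨⟨_, Module.Basis.subset_extend hxk rfl⟩, Module.Basis.extend_apply_self _ _⟩
  obtain ⟨v, hv⟩ := (TensorProduct.mk_surjective R M (ResidueField R)
    Ideal.Quotient.mk_surjective).comp_left w
  have hv' : ∀ i, (1 : ResidueField R) ⊗ₜ[R] Function.update v i₀ x i = w i := by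
    intro i
    rcases eq_or_ne i i₀ with rfl | hi
    · rw [Function.update_self, hi₀]
    · rw [Function.update_of_ne hi, ← congr_fun hv i]; rfl
  let b : Module.Basis _ R M := .mk
    (Module.IsLocalRing.linearIndependent_of_flat _
      ((funext hv' : TensorProduct.mk R _ M 1 ∘ _ = w) ▸ w.linearIndependent))
    (span_eq_top_of_tmul_eq_basis _ w hv').ge
  have hb : b i₀ = x := by
    rw [Module.Basis.mk_apply, Function.update_self]
  exact ⟨_, b.reindexRange, ⟨x, i₀, hb⟩, b.reindexRange_apply _⟩

/-- If `V` is a valuation ring and `V → S` an injective finite ring map with `S` a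
domain, then `S` is a free `V`-module with a basis containing `1`; consequently
`V → S` splits as a map of `V`-modules. -/
theorem free_basis_one_of_finite_domain_extension
    (V S : Type u) [CommRing V] [IsDomain V] [ValuationRing V]
    [CommRing S] [IsDomain S] [Algebra V S] [Module.Finite V S]
    (hinj : Function.Injective (algebraMap V S)) :
    Module.Free V S ∧
    (∃ (ι : Type u) (b : Module.Basis ι V S) (i : ι), b i = 1) ∧
    ∃ g : S →ₗ[V] V, g.comp (Algebra.linearMap V S) = LinearMap.id := by
  have : Module.IsTorsionFree V S := Module.isTorsionFree_iff_algebraMap_injective.mpr hinj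
  have : Module.Flat V S := .of_isTorsionFree_of_isBezout
  obtain ⟨ι, b, i, hbi⟩ :=
    exists_basis_of_one_tmul_ne_zero (one_tmul_one_ne_zero (R := V) (S := S))
  refine ⟨.of_basis b, ⟨ι, b, i, hbi⟩, b.coord i, ?_⟩
  ext
  simp [← hbi]
end

section
/- If R → S is a pure ring homomorphism and S is a splinter, then R is a splinter. -/
/-!
For a finite `R`-algebra `T` with `Spec T → Spec R` surjective, the base change `S ⊗[R] T` is a
finite `S`-algebra with `Spec (S ⊗[R] T) → Spec S` surjective, so `S → S ⊗[R] T` is pure since `S`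
is a splinter. Purity survives restriction of scalars to `R` and composition with the pure map
`R → S`, so `R → S ⊗[R] T` is pure. This map factors through `R → T`, which is therefore pure.
-/

universe u

/-- A ring `R` is a splinter if every finite ring map `R → T` inducing a surjection
on prime spectra is pure as a map of `R`-modules. -/
def IsSplinter (R : Type u) [CommRing R] : Prop :=
  ∀ (T : Type u) [CommRing T] [Algebra R T], Module.Finite R T →
    Function.Surjective (PrimeSpectrum.comap (algebraMap R T)) →
    ∀ (P : Type u) [AddCommGroup P] [Module R P],
      Function.Injective (LinearMap.rTensor P (Algebra.linearMap R T))

universe v w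

open TensorProduct

theorem TensorProduct.AlgebraTensorModule.cancelBaseChange_rTensor {R A M N : Type*}
    [CommSemiring R] [CommSemiring A] [Algebra R A] [AddCommMonoid M] [AddCommMonoid N]
    [Module R M] [Module R N] [Module A M] [Module A N] [IsScalarTower R A M]
    [IsScalarTower R A N] (P : Type*) [AddCommMonoid P] [Module R P] (f : M →ₗ[A] N)
    (x : M ⊗[A] (A ⊗[R] P)) :
    cancelBaseChange R A A N P (f.rTensor (A ⊗[R] P) x) =
      (f.restrictScalars R).rTensor P (cancelBaseChange R A A M P x) := by
  induction x with
  | zero => simp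
  | tmul m y =>
    induction y with
    | zero => simp
    | tmul a p => simp
    | add y z hy hz => simp_all [tmul_add]
  | add x y hx hy => simp_all

namespace LinearMap

variable {R : Type*} [CommRing R] {M N K : Type*} [AddCommGroup M] [AddCommGroup N]
  [AddCommGroup K] [Module R M] [Module R N] [Module R K]

def IsPure (f : M →ₗ[R] N) : Prop :=
  ∀ (P : Type w) [AddCommGroup P] [Module R P], Function.Injective (f.rTensor P)

namespace IsPure

variable {f : M →ₗ[R] N} {g : N →ₗ[R] K}

theorem comp (hg : IsPure.{w} g) (hf : IsPure.{w} f) : IsPure.{w} (g ∘ₗ f) := fun P _ _ => by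
  rw [rTensor_comp, coe_comp]
  exact (hg P).comp (hf P)

theorem of_comp (h : IsPure.{w} (g ∘ₗ f)) : IsPure.{w} f := fun P _ _ => by
  have := h P
  rw [rTensor_comp, coe_comp] at this
  exact this.of_comp

theorem restrictScalars {A : Type v} [CommRing A] [Algebra R A] [Module A M] [Module A N]
    [IsScalarTower R A M] [IsScalarTower R A N] {f : M →ₗ[A] N} (hf : IsPure.{max v w} f) :
    IsPure.{w} (f.restrictScalars R) := fun P _ _ => by
  let eM := AlgebraTensorModule.cancelBaseChange R A A M P
  let eN := AlgebraTensorModule.cancelBaseChange R A A N P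
  have hfactor : ⇑((f.restrictScalars R).rTensor P) = eN ∘ f.rTensor (A ⊗[R] P) ∘ eM.symm :=
    funext fun x => by
      simp [eM, eN, AlgebraTensorModule.cancelBaseChange_rTensor]
  rw [hfactor]
  exact eN.injective.comp ((hf _).comp eM.symm.injective)

end IsPure

end LinearMap

open AlgebraicGeometry CategoryTheory Limits in
theorem PrimeSpectrum.comap_algebraMap_tensorProduct_surjective
    (R S T : Type u) [CommRing R] [CommRing S] [CommRing T] [Algebra R S] [Algebra R T]
    (h : Function.Surjective (PrimeSpectrum.comap (algebraMap R T))) :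
    Function.Surjective (PrimeSpectrum.comap (algebraMap S (S ⊗[R] T))) := by
  -- `Spec (S ⊗[R] T)` is the fibre product, and surjective morphisms are stable under base change.
  have : Surjective (Spec.map (CommRingCat.ofHom (algebraMap R T))) := ⟨h⟩
  have hfst := (surjective_iff _).mp (inferInstance : Surjective ((pullbackSpecIso R S T).inv ≫
    pullback.fst (Spec.map (CommRingCat.ofHom (algebraMap R S)))
      (Spec.map (CommRingCat.ofHom (algebraMap R T)))))
  rwa [pullbackSpecIso_inv_fst'] at hfst

/-- If `R → S` is a pure ring homomorphism and `S` is a splinter, then `R` is a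
splinter. -/
theorem isSplinter_of_pure
    (R S : Type u) [CommRing R] [CommRing S] [Algebra R S]
    (hpure : ∀ (P : Type u) [AddCommGroup P] [Module R P],
      Function.Injective (LinearMap.rTensor P (Algebra.linearMap R S)))
    (hS : IsSplinter S) : IsSplinter R := by
  intro T _ _ _ hsurj
  have hbase : LinearMap.IsPure.{u} (Algebra.linearMap S (S ⊗[R] T)) :=
    hS _ inferInstance (PrimeSpectrum.comap_algebraMap_tensorProduct_surjective R S T hsurj)
  have hfactor : (Algebra.linearMap S (S ⊗[R] T)).restrictScalars R ∘ₗ Algebra.linearMap R S =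
      Algebra.TensorProduct.includeRight.toLinearMap ∘ₗ Algebra.linearMap R T := by
    ext
    simp
  have hcomp : LinearMap.IsPure.{u}
      ((Algebra.linearMap S (S ⊗[R] T)).restrictScalars R ∘ₗ Algebra.linearMap R S) :=
    hbase.restrictScalars.comp hpure
  rw [hfactor] at hcomp
  exact hcomp.of_comp
end

section
/- A domain R is a splinter if and only if the map R → R⁺ to its absolute integral closure is pure as a map of R-modules. -/
set_option synthInstance.maxHeartbeats 1000000
set_option maxHeartbeats 1000000

universe u

/-!
If `R → R⁺` is pure, let `R → T` be finite and surjective on spectra and pick a prime `Q` of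
`T` over `(0)`. Then `T ⧸ Q` is a domain, integral over `R` and containing it, so it embeds
into `R⁺` over `R`; thus `R → R⁺` factors through `T`, and purity passes to `R → T`.

Conversely, `R⁺ ⊗ P` is the direct limit of the `A ⊗ P` over the finitely generated
subalgebras `A` of `R⁺`, so purity of `R → R⁺` may be tested on them. Each such `A` is finite
over `R` and contains `R`, hence is surjective on spectra by lying over, and a splinter is pure
in it.
-/

open LinearMap Function

def Algebra.IsPure (R : Type u) (S : Type*) [CommRing R] [Ring S] [Algebra R S] : Prop :=
  ∀ (P : Type u) [AddCommGroup P] [Module R P], Injective (rTensor P (Algebra.linearMap R S))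

namespace Algebra.IsPure

variable {R : Type u} {S S' : Type*} [CommRing R] [Ring S] [Ring S'] [Algebra R S]
  [Algebra R S']

theorem of_algHom (f : S →ₐ[R] S') (h : IsPure R S') : IsPure R S := fun P _ _ => by
  have hf : Algebra.linearMap R S' = f.toLinearMap ∘ₗ Algebra.linearMap R S :=
    LinearMap.ext fun r => (f.commutes r).symm
  have hP := h P
  rw [hf, rTensor_comp, coe_comp] at hP
  exact hP.of_comp

theorem of_forall_fg (h : ∀ A : Subalgebra R S, A.FG → IsPure R A) : IsPure R S := by
  intro P _ _ x y hxy
  have hbot : (⊥ : Subalgebra R S).val.toLinearMap ∘ₗ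
      Algebra.linearMap R (⊥ : Subalgebra R S) = Algebra.linearMap R S := rfl
  rw [← hbot, rTensor_comp, coe_comp, comp_apply, comp_apply] at hxy
  obtain ⟨A, hbotA, hA, hxyA⟩ :=
    TensorProduct.Algebra.eq_of_fg_of_subtype_eq Subalgebra.fg_bot hxy
  have hincl : (Subalgebra.inclusion hbotA).toLinearMap ∘ₗ
      Algebra.linearMap R (⊥ : Subalgebra R S) = Algebra.linearMap R A := rfl
  rw [← comp_apply (rTensor P _), ← comp_apply (rTensor P _), ← rTensor_comp, hincl] at hxyA
  exact h A hA P hxyA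

end Algebra.IsPure

theorem Ideal.ker_algebraMap_quotient {R T : Type*} [CommRing R] [CommRing T]
    [Algebra R T] (Q : Ideal T) :
    RingHom.ker (algebraMap R (T ⧸ Q)) = Q.comap (algebraMap R T) := by
  rw [IsScalarTower.algebraMap_eq R T (T ⧸ Q), ← RingHom.comap_ker,
    Ideal.Quotient.algebraMap_eq, Ideal.mk_ker]

theorem nonempty_algHom_integralClosure {R D L : Type*} [CommRing R] [IsDomain R] [CommRing D]
    [IsDomain D] [Algebra R D] [FaithfulSMul R D] [Algebra.IsIntegral R D] [Field L]
    [IsAlgClosed L] [Algebra R L] [FaithfulSMul R L] : Nonempty (D →ₐ[R] integralClosure R L) :=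
  let φ : D →ₐ[R] L := IsAlgClosed.lift
  ⟨φ.codRestrict _ fun d => (Algebra.IsIntegral.isIntegral d).map φ⟩

theorem isSplinter_of_isPure_integralClosure {R L : Type u} [CommRing R] [IsDomain R] [Field L]
    [IsAlgClosed L] [Algebra R L] [FaithfulSMul R L]
    (h : Algebra.IsPure R (integralClosure R L)) : IsSplinter R := by
  intro T _ _ _ hT
  obtain ⟨Q, hQ⟩ := hT ⟨⊥, Ideal.isPrime_bot⟩
  have hQ : Q.asIdeal.comap (algebraMap R T) = ⊥ := congrArg PrimeSpectrum.asIdeal hQ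
  have : FaithfulSMul R (T ⧸ Q.asIdeal) := by
    rw [faithfulSMul_iff_algebraMap_injective, RingHom.injective_iff_ker_eq_bot,
      Ideal.ker_algebraMap_quotient, hQ]
  obtain ⟨φ⟩ := nonempty_algHom_integralClosure (R := R) (D := T ⧸ Q.asIdeal) (L := L)
  exact Algebra.IsPure.of_algHom (φ.comp (Ideal.Quotient.mkₐ R Q.asIdeal)) h

theorem IsSplinter.isPure_of_isIntegral {R T : Type u} [CommRing R] [CommRing T] [Algebra R T]
    [Algebra.IsIntegral R T] (hR : IsSplinter R)
    (hT : Surjective (PrimeSpectrum.comap (algebraMap R T))) : Algebra.IsPure R T := by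
  refine Algebra.IsPure.of_forall_fg fun A hA => ?_
  have : Algebra.IsIntegral R A := .of_injective A.val Subtype.val_injective
  have : Algebra.FiniteType R A := (Subalgebra.fg_iff_finiteType A).mp hA
  refine hR A Algebra.IsIntegral.finite
    (Surjective.of_comp (g := PrimeSpectrum.comap A.val.toRingHom) ?_)
  rwa [← PrimeSpectrum.comap_comp]

/-- A domain `R` is a splinter if and only if the map to its absolute integral
closure `R⁺` (the integral closure of `R` in an algebraic closure of its fraction
field) is pure as a map of `R`-modules. -/
theorem isSplinter_iff_pure_absoluteIntegralClosure
    (R : Type u) [CommRing R] [IsDomain R] :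
    IsSplinter R ↔
      ∀ (P : Type u) [AddCommGroup P] [Module R P],
        Function.Injective (LinearMap.rTensor P
          (Algebra.linearMap R (integralClosure R (AlgebraicClosure (FractionRing R))))) := by
  have : FaithfulSMul R (AlgebraicClosure (FractionRing R)) :=
    FaithfulSMul.trans R (FractionRing R) _
  have : FaithfulSMul R (integralClosure R (AlgebraicClosure (FractionRing R))) :=
    FaithfulSMul.tower_bot R _ (AlgebraicClosure (FractionRing R))
  exact ⟨fun h => h.isPure_of_isIntegral (Algebra.IsIntegral.comap_surjective _ _),
    isSplinter_of_isPure_integralClosure⟩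
end

section
/- Let R be an absolutely integrally closed domain (i.e., R is integrally closed in an algebraic closure of its fraction field). Then every injective finite ring map R → S admits a left inverse which is a ring homomorphism. -/
universe u

open Polynomial

lemma aic_eval₂_surj {R T : Type*} [CommRing R] [Nontrivial R] [CommRing T] [IsDomain T]
    (hR : ∀ p : Polynomial R, p.Monic → ∃ r : R, p.eval r = 0)
    (f : R →+* T) :
    ∀ (n : ℕ) (p : Polynomial R), p.natDegree = n → p.Monic →
      ∀ s : T, p.eval₂ f s = 0 → ∃ r : R, f r = s := by
  intro n
  induction n using Nat.strong_induction_on with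
  | _ n ih =>
    intro p hdeg hm s hs
    rcases Nat.eq_zero_or_pos n with h0 | hpos
    · subst h0
      have hp1 : p = 1 := Polynomial.eq_one_of_monic_natDegree_zero hm hdeg
      simp [hp1] at hs
    · obtain ⟨r, hr⟩ := hR p hm
      set q := p /ₘ (X - C r) with hq
      have hfac : (X - C r) * q = p :=
        Polynomial.mul_divByMonic_eq_iff_isRoot.mpr hr
      have hqm : q.Monic := by
        apply (monic_X_sub_C r).of_mul_monic_left
        rwa [hfac]
      have hqdeg : q.natDegree = n - 1 := by
        rw [hq, Polynomial.natDegree_divByMonic p (monic_X_sub_C r),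
          natDegree_X_sub_C, hdeg]
      have heval : (s - f r) * q.eval₂ f s = 0 := by
        have := hs
        rw [← hfac, eval₂_mul, eval₂_sub, eval₂_X, eval₂_C] at this
        exact this
      rcases mul_eq_zero.mp heval with h | h
      · exact ⟨r, (sub_eq_zero.mp h).symm⟩
      · exact ih (n - 1) (by omega) q hqdeg hqm s h
  
/-- If `R` is an absolutely integrally closed domain (every monic polynomial over `R`
has a root in `R`), then every injective finite ring map `R → S` admits a left
inverse which is a ring homomorphism. -/
theorem ringHom_section_of_absolutelyIntegrallyClosed
    (R : Type u) [CommRing R] [IsDomain R]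
    (hR : ∀ p : Polynomial R, p.Monic → ∃ r : R, p.eval r = 0)
    (S : Type u) [CommRing S] [Algebra R S] [Module.Finite R S]
    (hinj : Function.Injective (algebraMap R S)) :
    ∃ g : S →+* R, g.comp (algebraMap R S) = RingHom.id R := by
  have hint : Algebra.IsIntegral R S := Algebra.IsIntegral.of_finite R S
  haveI : (⊥ : Ideal R).IsPrime := Ideal.bot_prime
  obtain ⟨Q, -, hQp, hQ0⟩ := Ideal.exists_ideal_over_prime_of_isIntegral (⊥ : Ideal R)
    (⊥ : Ideal S) (by simp [Ideal.comap_bot_of_injective _ hinj])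
  haveI := hQp
  let f : R →+* S ⧸ Q := (Ideal.Quotient.mk Q).comp (algebraMap R S)
  have hfinj : Function.Injective f := by
    have hker : RingHom.ker f = Ideal.comap (algebraMap R S) Q := by
      ext x
      rw [RingHom.mem_ker, Ideal.mem_comap, RingHom.comp_apply,
        Ideal.Quotient.eq_zero_iff_mem]
    rw [RingHom.injective_iff_ker_eq_bot, hker, hQ0]
  have hfsurj : Function.Surjective f := by
    intro s
    obtain ⟨x, rfl⟩ := Ideal.Quotient.mk_surjective s
    obtain ⟨p, hpm, hpe⟩ := hint.isIntegral x
    apply aic_eval₂_surj hR f p.natDegree p rfl hpm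
    have : Polynomial.eval₂ f (Ideal.Quotient.mk Q x) p
        = Ideal.Quotient.mk Q (Polynomial.eval₂ (algebraMap R S) x p) := by
      rw [Polynomial.hom_eval₂]
    rw [this]
    simpa using congrArg (Ideal.Quotient.mk Q) hpe
  let e : R ≃+* (S ⧸ Q) := RingEquiv.ofBijective f ⟨hfinj, hfsurj⟩
  refine ⟨(e.symm : S ⧸ Q →+* R).comp (Ideal.Quotient.mk Q), ?_⟩
  ext r
  simp only [RingHom.coe_comp, Function.comp_apply, RingHom.id_apply]
  exact e.symm_apply_apply r
end

section
/- Let V be a valuation ring and B a finitely generated V-algebra that is torsion-free as a V-module. Then B is a finitely presented V-algebra. -/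
/-!
Present `B` as `V[x₁,…,xₙ] ⧸ I`; torsion-freeness of `B` says that `I` is saturated:
`c • f ∈ I` with `c ≠ 0` forces `f ∈ I`. Homogenize: let `Ĩₑ` be the forms `F` of degree `e` in
`X₀,…,Xₙ` with `F(1, x) ∈ I`. Each `Ĩₑ` is saturated in the finite free `V`-module `Sₑ` of forms
of degree `e`; the quotient is finite and torsion-free, hence free over the valuation ring `V`, so
`Ĩₑ` is finitely generated. A form of `Ĩₑ` with coefficients in the maximal ideal `𝔪` is `c • G`
with `c ∈ 𝔪` (its content ideal is principal), and saturation puts `G` back into `Ĩₑ`; thus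
`Ĩₑ ∩ 𝔪 Sₑ = 𝔪 Ĩₑ`. Over the residue field the reductions of the `Ĩₑ` are the graded pieces of a
homogeneous ideal of a Noetherian polynomial ring, so for large `e` they are obtained from the
previous one by multiplying with the linear forms. Lifting, `Ĩₑ₊₁ = X·Ĩₑ + 𝔪 Ĩₑ₊₁`, and Nakayama
gives `Ĩₑ₊₁ = X·Ĩₑ`. Hence `I` is generated by the dehomogenizations of a finite generating set of
a single `Ĩ_E`.
-/

open MvPolynomial Filter

theorem Submodule.fg_of_isTorsionFree_quotient {V M : Type*} [CommRing V] [IsDomain V]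
    [ValuationRing V] [AddCommGroup M] [Module V M] [Module.Finite V M] (N : Submodule V M)
    [Module.IsTorsionFree V (M ⧸ N)] : N.FG := by
  have : Module.Flat V (M ⧸ N) := Module.Flat.flat_iff_torsion_eq_bot_of_isBezout.mpr
    (Submodule.isTorsionFree_iff_torsion_eq_bot.mp inferInstance)
  have : Module.Free V (M ⧸ N) := Module.free_of_flat_of_isLocalRing
  have : Module.FinitePresentation V (M ⧸ N) := Module.finitePresentation_of_projective _ _
  simpa using Module.FinitePresentation.fg_ker N.mkQ N.mkQ_surjective

theorem Ideal.mem_of_smul_mem {R A : Type*} [CommRing R] [IsDomain R] [CommRing A] [Algebra R A]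
    {J : Ideal A} [Module.IsTorsionFree R (A ⧸ J)] {c : R} (hc : c ≠ 0) {x : A}
    (h : c • x ∈ J) : x ∈ J := by
  rw [← Ideal.Quotient.eq_zero_iff_mem] at h ⊢
  rwa [← Ideal.Quotient.mkₐ_eq_mk R, map_smul, smul_eq_zero_iff_right hc] at h

namespace MvPolynomial

theorem exists_C_dvd_of_mem_map_C {R σ : Type*} [CommRing R] [IsBezout R] {J : Ideal R}
    {p : MvPolynomial σ R} (hp : p ∈ J.map C) : ∃ c ∈ J, C c ∣ p := by
  obtain ⟨c, hc⟩ := IsBezout.isPrincipal_of_FG (Ideal.span (p.coeffs : Set R)) ⟨p.coeffs, rfl⟩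
  replace hc : Ideal.span (p.coeffs : Set R) = Ideal.span {c} := hc
  have hcoeffs : ∀ d, coeff d p ∈ Ideal.span {c} := by
    intro d
    by_cases hd : d ∈ p.support
    · exact hc ▸ Ideal.subset_span (coeff_mem_coeffs d (mem_support_iff.mp hd))
    · simp [notMem_support_iff.mp hd]
  refine ⟨c, ?_, (C_dvd_iff_dvd_coeff c p).mpr fun d => Ideal.mem_span_singleton.mp (hcoeffs d)⟩
  have hJ : Ideal.span (p.coeffs : Set R) ≤ J := Ideal.span_le.mpr fun x hx => by
    obtain ⟨d, -, rfl⟩ := mem_coeffs_iff.mp hx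
    exact mem_map_C_iff.mp hp d
  exact hJ (hc ▸ Ideal.mem_span_singleton_self c)

theorem homogeneousSubmodule_succ (σ R : Type*) [CommSemiring R] (m : ℕ) :
    homogeneousSubmodule σ R (m + 1) =
      homogeneousSubmodule σ R 1 * homogeneousSubmodule σ R m := by
  rw [← homogeneousSubmodule_one_pow (σ := σ) (R := R) (m + 1), pow_succ',
    homogeneousSubmodule_one_pow]

theorem restrictScalars_homogeneousSubmodule_one_mul_span_map {R k σ : Type*} [CommRing R]
    [CommRing k] [Algebra R k] (hk : Function.Surjective (algebraMap R k))
    (M : Submodule R (MvPolynomial σ R)) :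
    Submodule.restrictScalars R (homogeneousSubmodule σ k 1 *
        Submodule.span k (M.map (mapAlgHom (Algebra.ofId R k)).toLinearMap)) =
      (homogeneousSubmodule σ R 1 * M).map (mapAlgHom (Algebra.ofId R k)).toLinearMap := by
  rw [Submodule.restrictScalars_mul, Submodule.map_mul, homogeneousSubmodule_one_eq_span_X,
    homogeneousSubmodule_one_eq_span_X, Submodule.restrictScalars_span R k hk,
    Submodule.restrictScalars_span R k hk, Submodule.map_span, ← Set.range_comp, Submodule.span_eq]
  congr
  funext i
  simp

section GradedFamily

variable {R σ : Type*} [CommRing R] {U : ℕ → Submodule R (MvPolynomial σ R)}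

theorem homogeneousSubmodule_mul_le_of_forall
    (hU : ∀ e, homogeneousSubmodule σ R 1 * U e ≤ U (e + 1)) (m d : ℕ) :
    homogeneousSubmodule σ R m * U d ≤ U (m + d) := by
  induction m with
  | zero => simp [homogeneousSubmodule_zero]
  | succ m ih =>
    rw [homogeneousSubmodule_succ, mul_assoc, add_right_comm]
    exact (mul_le_mul_right ih _).trans (hU _)

attribute [local instance] gradedAlgebra in
theorem homogeneousComponent_mul_mem_of_mem
    (hU : ∀ e, homogeneousSubmodule σ R 1 * U e ≤ U (e + 1)) {d e : ℕ}
    (hUd : U d ≤ homogeneousSubmodule σ R d) (hde : d ≤ e) (a : MvPolynomial σ R) {g}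
    (hg : g ∈ U d) :
    homogeneousComponent (e + 1) (a * g) ∈ homogeneousSubmodule σ R 1 * U e := by
  have hcomp : homogeneousComponent (e + 1) (a * g) = homogeneousComponent (e - d + 1) a * g := by
    rw [← decomposition.decompose'_apply, ← decomposition.decompose'_apply,
      show e - d + 1 = e + 1 - d by omega]
    exact DirectSum.coe_decompose_mul_of_right_mem_of_le _ (hUd hg) (by omega)
  have hmul : homogeneousSubmodule σ R (e - d + 1) * U d ≤ homogeneousSubmodule σ R 1 * U e := by
    rw [homogeneousSubmodule_succ, mul_assoc]
    exact mul_le_mul_right ((homogeneousSubmodule_mul_le_of_forall hU _ _).trans_eq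
      (by rw [Nat.sub_add_cancel hde])) _
  rw [hcomp]
  exact hmul (Submodule.mul_mem_mul (homogeneousComponent_mem _ _) hg)

theorem homogeneousComponent_mem_of_mem_span (hUH : ∀ e, U e ≤ homogeneousSubmodule σ R e)
    (hU : ∀ e, homogeneousSubmodule σ R 1 * U e ≤ U (e + 1)) {E e : ℕ} (he : E ≤ e)
    {G : MvPolynomial σ R} (hG : G ∈ Ideal.span (⋃ d ≤ E, (U d : Set (MvPolynomial σ R)))) :
    homogeneousComponent (e + 1) G ∈ homogeneousSubmodule σ R 1 * U e := by
  suffices ∀ a, homogeneousComponent (e + 1) (a * G) ∈ homogeneousSubmodule σ R 1 * U e by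
    simpa using this 1
  induction hG using Submodule.span_induction with
  | mem g hg =>
    obtain ⟨d, hd, hg⟩ := Set.mem_iUnion₂.mp hg
    exact fun a => homogeneousComponent_mul_mem_of_mem hU (hUH d) (hd.trans he) a hg
  | zero => simp
  | add x y _ _ hx hy => exact fun a => by rw [mul_add, map_add]; exact add_mem (hx a) (hy a)
  | smul b x _ hx => exact fun a => by rw [smul_eq_mul, ← mul_assoc]; exact hx _

theorem eventually_homogeneousSubmodule_one_mul_eq [IsNoetherianRing R] [Finite σ]
    (hUH : ∀ e, U e ≤ homogeneousSubmodule σ R e)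
    (hU : ∀ e, homogeneousSubmodule σ R 1 * U e ≤ U (e + 1)) :
    ∀ᶠ e in atTop, homogeneousSubmodule σ R 1 * U e = U (e + 1) := by
  let K : ℕ →o Ideal (MvPolynomial σ R) :=
    ⟨fun e => Ideal.span (⋃ d ≤ e, (U d : Set (MvPolynomial σ R))), fun a b hab =>
      Ideal.span_mono (Set.biUnion_mono (fun d hd => le_trans hd hab) fun _ _ => le_rfl)⟩
  obtain ⟨E, hE⟩ := monotone_stabilizes_iff_noetherian.mpr inferInstance K
  filter_upwards [eventually_ge_atTop E] with e he
  refine (hU e).antisymm fun F hF => ?_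
  have hFK : F ∈ K E :=
    hE (e + 1) (by omega) ▸ Ideal.subset_span (Set.mem_iUnion₂.mpr ⟨e + 1, le_rfl, hF⟩)
  simpa [homogeneousComponent_of_mem (hUH _ hF)] using
    homogeneousComponent_mem_of_mem_span hUH hU he hFK

end GradedFamily

section Dehomogenize

variable {R : Type*} [CommRing R] {n : ℕ}

noncomputable def dehomogenize : MvPolynomial (Fin (n + 1)) R →ₐ[R] MvPolynomial (Fin n) R :=
  aeval (Fin.cons 1 X)

@[simp]
theorem dehomogenize_X_zero : dehomogenize (X 0 : MvPolynomial (Fin (n + 1)) R) = 1 := by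
  simp [dehomogenize]

@[simp]
theorem dehomogenize_rename_succ (p : MvPolynomial (Fin n) R) :
    dehomogenize (rename Fin.succ p) = p := by
  rw [dehomogenize, aeval_rename]
  convert aeval_X_left_apply p
  funext i
  simp

theorem exists_isHomogeneous_dehomogenize_eq (f : MvPolynomial (Fin n) R) {e : ℕ}
    (he : f.totalDegree ≤ e) :
    ∃ F : MvPolynomial (Fin (n + 1)) R, F.IsHomogeneous e ∧ dehomogenize F = f := by
  refine ⟨∑ i ∈ Finset.range (f.totalDegree + 1),
      X 0 ^ (e - i) * rename Fin.succ (homogeneousComponent i f), ?_, ?_⟩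
  · refine IsHomogeneous.sum _ _ _ fun i hi => ?_
    have hie : e - i + i = e := Nat.sub_add_cancel (by simp at hi; omega)
    simpa [hie] using ((isHomogeneous_X_pow (0 : Fin (n + 1)) (e - i)).mul
      (homogeneousComponent_isHomogeneous i f).rename_isHomogeneous)
  · conv_rhs => rw [← sum_homogeneousComponent f]
    simp

end Dehomogenize

end MvPolynomial

namespace Ideal

variable {R : Type*} [CommRing R] {n : ℕ} (I : Ideal (MvPolynomial (Fin n) R))

noncomputable def homogenizationComponent (e : ℕ) :
    Submodule R (MvPolynomial (Fin (n + 1)) R) :=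
  homogeneousSubmodule (Fin (n + 1)) R e ⊓ (I.restrictScalars R).comap dehomogenize.toLinearMap

variable {I}

theorem mem_homogenizationComponent {e : ℕ} {F : MvPolynomial (Fin (n + 1)) R} :
    F ∈ I.homogenizationComponent e ↔ F.IsHomogeneous e ∧ dehomogenize F ∈ I :=
  Iff.rfl

variable (I) in
theorem homogeneousSubmodule_one_mul_homogenizationComponent_le (e : ℕ) :
    homogeneousSubmodule (Fin (n + 1)) R 1 * I.homogenizationComponent e ≤
      I.homogenizationComponent (e + 1) :=
  Submodule.mul_le.mpr fun a ha F hF => mem_homogenizationComponent.mpr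
    ⟨by simpa [add_comm] using ha.mul hF.1, by simpa using I.mul_mem_left _ hF.2⟩

theorem exists_mem_homogenizationComponent {f : MvPolynomial (Fin n) R} (hf : f ∈ I) {e : ℕ}
    (he : f.totalDegree ≤ e) : ∃ F ∈ I.homogenizationComponent e, dehomogenize F = f := by
  obtain ⟨F, hF, rfl⟩ := exists_isHomogeneous_dehomogenize_eq f he
  exact ⟨F, ⟨hF, hf⟩, rfl⟩

variable [IsDomain R] [Module.IsTorsionFree R (MvPolynomial (Fin n) R ⧸ I)]

theorem mem_homogenizationComponent_of_smul_mem {e : ℕ} {c : R} (hc : c ≠ 0)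
    {F : MvPolynomial (Fin (n + 1)) R} (h : c • F ∈ I.homogenizationComponent e) :
    F ∈ I.homogenizationComponent e := by
  refine ⟨fun d hd => h.1 ?_, mem_of_smul_mem hc (by simpa using h.2)⟩
  simpa [coeff_smul] using mul_ne_zero hc hd

variable (I) in
theorem homogenizationComponent_fg [ValuationRing R] (e : ℕ) :
    (I.homogenizationComponent e).FG := by
  let H := homogeneousSubmodule (Fin (n + 1)) R e
  let N := (I.homogenizationComponent e).comap H.subtype
  have : Module.Finite R H := Module.Finite.iff_fg.mpr (homogeneousSubmodule_fg _ _ e)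
  have : Module.IsTorsionFree R (H ⧸ N) := Module.isTorsionFree_iff_smul_eq_zero.mpr
    fun c x h => by
      obtain ⟨F, rfl⟩ := N.mkQ_surjective x
      refine or_iff_not_imp_left.mpr fun hc => (Submodule.Quotient.mk_eq_zero N).mpr ?_
      exact mem_homogenizationComponent_of_smul_mem hc ((Submodule.Quotient.mk_eq_zero N).mp h)
  have hmap : N.map H.subtype = I.homogenizationComponent e := by
    rw [Submodule.map_comap_subtype]
    exact inf_eq_right.mpr inf_le_left
  exact hmap ▸ N.fg_of_isTorsionFree_quotient.map H.subtype

theorem mem_smul_homogenizationComponent [IsBezout R] {J : Ideal R} {e : ℕ}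
    {F : MvPolynomial (Fin (n + 1)) R} (hF : F ∈ I.homogenizationComponent e)
    (hJ : F ∈ J.map C) : F ∈ J • I.homogenizationComponent e := by
  obtain ⟨c, hcJ, G, rfl⟩ := exists_C_dvd_of_mem_map_C hJ
  rcases eq_or_ne c 0 with rfl | hc
  · simp
  rw [← smul_eq_C_mul] at hF ⊢
  exact Submodule.smul_mem_smul hcJ (mem_homogenizationComponent_of_smul_mem hc hF)

variable (I) in
theorem eventually_homogeneousSubmodule_one_mul_homogenizationComponent_eq [ValuationRing R] :
    ∀ᶠ e in atTop, homogeneousSubmodule (Fin (n + 1)) R 1 * I.homogenizationComponent e =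
      I.homogenizationComponent (e + 1) := by
  let ψ := mapAlgHom (σ := Fin (n + 1)) (Algebra.ofId R (IsLocalRing.ResidueField R))
  have hres : Function.Surjective (algebraMap R (IsLocalRing.ResidueField R)) :=
    IsLocalRing.residue_surjective
  let U (e : ℕ) : Submodule (IsLocalRing.ResidueField R)
      (MvPolynomial (Fin (n + 1)) (IsLocalRing.ResidueField R)) :=
    Submodule.span _ ((I.homogenizationComponent e).map ψ.toLinearMap)
  have hUH : ∀ e, U e ≤ homogeneousSubmodule _ _ e := fun e => Submodule.span_le.mpr <| by
    rintro _ ⟨F, hF, rfl⟩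
    exact hF.1.map _
  have hU : ∀ e, homogeneousSubmodule _ _ 1 * U e ≤ U (e + 1) := fun e x hx => by
    have hx' : x ∈ (homogeneousSubmodule _ _ 1 * U e).restrictScalars R := hx
    rw [restrictScalars_homogeneousSubmodule_one_mul_span_map hres] at hx'
    obtain ⟨G, hG, rfl⟩ := hx'
    exact Submodule.subset_span
      ⟨G, homogeneousSubmodule_one_mul_homogenizationComponent_le I e hG, rfl⟩
  filter_upwards [eventually_homogeneousSubmodule_one_mul_eq hUH hU] with e he
  refine (homogeneousSubmodule_one_mul_homogenizationComponent_le I e).antisymm <|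
    Submodule.le_of_le_smul_of_le_jacobson_bot (homogenizationComponent_fg I (e + 1))
      (IsLocalRing.maximalIdeal_le_jacobson ⊥) fun F hF => ?_
  obtain ⟨G, hG, hGF⟩ : ψ F ∈
      (homogeneousSubmodule _ _ 1 * I.homogenizationComponent e).map ψ.toLinearMap := by
    rw [← restrictScalars_homogeneousSubmodule_one_mul_span_map hres]
    exact he ▸ Submodule.subset_span ⟨F, hF, rfl⟩
  have hker : F - G ∈ (IsLocalRing.maximalIdeal R).map C := by
    rw [← IsLocalRing.ker_residue, ← ker_map, RingHom.mem_ker, map_sub]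
    exact sub_eq_zero.mpr hGF.symm
  have hFG : F - G ∈ I.homogenizationComponent (e + 1) :=
    sub_mem hF (homogeneousSubmodule_one_mul_homogenizationComponent_le I e hG)
  rw [← add_sub_cancel G F]
  exact Submodule.add_mem_sup hG (mem_smul_homogenizationComponent hFG hker)

variable (I) in
theorem fg_of_isTorsionFree_quotient [ValuationRing R] : I.FG := by
  obtain ⟨E, hE⟩ :=
    (eventually_homogeneousSubmodule_one_mul_homogenizationComponent_eq I).exists_forall_of_atTop
  let M := (I.homogenizationComponent E).map dehomogenize.toLinearMap
  have hle : ∀ e ≥ E, I.homogenizationComponent e ≤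
      ((Ideal.span (M : Set (MvPolynomial (Fin n) R))).restrictScalars R).comap
        dehomogenize.toLinearMap := by
    intro e he
    induction e, he using Nat.le_induction with
    | base => exact fun F hF => subset_span ⟨F, hF, rfl⟩
    | succ e he ih =>
      rw [← hE e he]
      exact Submodule.mul_le.mpr fun a _ F hF => by simpa using mul_mem_left _ _ (ih hF)
  have hI : I = Ideal.span M := by
    refine le_antisymm (fun f hf => ?_) (span_le.mpr ?_)
    · obtain ⟨F, hF, rfl⟩ := exists_mem_homogenizationComponent hf (le_max_right E f.totalDegree)
      exact hle _ (le_max_left _ _) hF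
    · rintro _ ⟨F, hF, rfl⟩
      exact hF.2
  obtain ⟨t, ht : Submodule.span R t = M⟩ :=
    (homogenizationComponent_fg I E).map dehomogenize.toLinearMap
  refine ⟨t, ?_⟩
  rw [hI, ← ht]
  exact (Submodule.span_span_of_tower R _ _).symm

end Ideal

universe u

/-- Nagata's theorem: a finitely generated algebra over a valuation ring that is
torsion-free as a module is a finitely presented algebra. -/
theorem finitePresentation_of_finiteType_torsionFree
    (V B : Type u) [CommRing V] [IsDomain V] [ValuationRing V]
    [CommRing B] [Algebra V B] [Algebra.FiniteType V B] [NoZeroSMulDivisors V B] :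
    Algebra.FinitePresentation V B := by
  obtain ⟨n, φ, hφ⟩ := Algebra.FiniteType.iff_quotient_mvPolynomial''.mp ‹_›
  have : Module.IsTorsionFree V (MvPolynomial (Fin n) V ⧸ RingHom.ker φ) :=
    (Ideal.quotientKerAlgEquivOfSurjective hφ).injective.moduleIsTorsionFree _ (map_smul _)
  exact ⟨n, φ, hφ, (RingHom.ker φ).fg_of_isTorsionFree_quotient⟩
end
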